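/- Define the vector field 𝔔 = (𝔔_x, 𝔔_y) on ℝ² by 𝔔_x(x,y) = 2·cos x + 2·cos y + 2x·sin y + 2√3·sin(√3·x/2)·sin(y/2) − x·cos(√3·x/2)·sin(y/2) + √3·y·sin(√3·x/2)·cos(y/2) − 2·cos(x/2)·cos(√3·y/2) + √3·y·cos(x/2)·sin(√3·y/2) − 2√3·sin(x/2)·sin(√3·y/2) − 3x·sin(x/2)·cos(√3·y/2) − 2·cos(√3·x/2)·cos(y/2), and 𝔔_y(x,y) = 𝔔_x(y,x). Then 𝔔 satisfies the vector Helmholtz equation Δ𝔔 = −𝔔 (componentwise, i.e. Δ𝔔_x = −𝔔_x and Δ𝔔_y = −𝔔_y) and is solenoidal: ∂𝔔_x/∂x + ∂𝔔_y/∂y = 0. -/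

import Mathlib

/-!
Write `Qx = P + x A + y B`, where `P`, `A`, `B` are superpositions of plane waves whose wave
vectors `(1, 0)`, `(0, 1)`, `(√3/2, 1/2)`, `(1/2, √3/2)` are unit vectors, so that
`ΔP = -P`, `ΔA = -A`, `ΔB = -B`. Since `Δ(x A) = x ΔA + 2 ∂ₓA`, this gives
`ΔQx + Qx = 2 (∂ₓA + ∂ᵧB)`, and here `∂ₓA + ∂ᵧB = 0`.
The second component is the first one with the coordinates swapped, and the divergence
vanishes because `∂ₓQx (x, y) = -∂ₓQx (y, x)`.
-/

noncomputable section

open Real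

/-- Partial derivative in the `i`-th coordinate direction, on ℝ². -/
def pd2 (i : Fin 2) (F : (Fin 2 → ℝ) → ℝ) : (Fin 2 → ℝ) → ℝ :=
  fun v => deriv (fun t => F (Function.update v i t)) (v i)

/-- Laplacian of a scalar function on ℝ². -/
def lap2 (F : (Fin 2 → ℝ) → ℝ) : (Fin 2 → ℝ) → ℝ :=
  fun v => pd2 0 (pd2 0 F) v + pd2 1 (pd2 1 F) v

/-- Divergence of a vector field on ℝ². -/
def div2 (V : (Fin 2 → ℝ) → (Fin 2 → ℝ)) : (Fin 2 → ℝ) → ℝ :=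
  fun v => pd2 0 (fun w => V w 0) v + pd2 1 (fun w => V w 1) v

/-- The first component of the dihedral lambent field `𝔔`. -/
def Qx : ℝ → ℝ → ℝ := fun x y =>
  2 * Real.cos x + 2 * Real.cos y + 2 * x * Real.sin y
    + 2 * Real.sqrt 3 * Real.sin (Real.sqrt 3 * x / 2) * Real.sin (y / 2)
    - x * Real.cos (Real.sqrt 3 * x / 2) * Real.sin (y / 2)
    + Real.sqrt 3 * y * Real.sin (Real.sqrt 3 * x / 2) * Real.cos (y / 2)
    - 2 * Real.cos (x / 2) * Real.cos (Real.sqrt 3 * y / 2)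
    + Real.sqrt 3 * y * Real.cos (x / 2) * Real.sin (Real.sqrt 3 * y / 2)
    - 2 * Real.sqrt 3 * Real.sin (x / 2) * Real.sin (Real.sqrt 3 * y / 2)
    - 3 * x * Real.sin (x / 2) * Real.cos (Real.sqrt 3 * y / 2)
    - 2 * Real.cos (Real.sqrt 3 * x / 2) * Real.cos (y / 2)

/-- The dihedral lambent vector field `𝔔 = (𝔔ₓ(x,y), 𝔔ₓ(y,x))`. -/
def Qfield : (Fin 2 → ℝ) → (Fin 2 → ℝ) := fun v => ![Qx (v 0) (v 1), Qx (v 1) (v 0)]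

section Uncurry

variable (f : ℝ → ℝ → ℝ) (v : Fin 2 → ℝ)

theorem pd2_zero_uncurry :
    pd2 0 (fun w => f (w 0) (w 1)) v = deriv (fun t => f t (v 1)) (v 0) := by
  simp [pd2]

theorem pd2_one_uncurry :
    pd2 1 (fun w => f (w 0) (w 1)) v = deriv (fun t => f (v 0) t) (v 1) := by
  simp [pd2]

theorem lap2_uncurry :
    lap2 (fun w => f (w 0) (w 1)) v =
      deriv (deriv fun t => f t (v 1)) (v 0) + deriv (deriv fun t => f (v 0) t) (v 1) := by
  rw [lap2, funext (pd2_zero_uncurry f), funext (pd2_one_uncurry f)]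
  exact congrArg₂ (· + ·) (pd2_zero_uncurry (fun x y => deriv (fun t => f t y) x) v)
    (pd2_one_uncurry (fun x y => deriv (fun t => f x t) y) v)

end Uncurry

def dxQx (x y : ℝ) : ℝ :=
  -2 * sin x + 2 * sin y + 2 * cos (√3 * x / 2) * sin (y / 2)
    + √3 / 2 * x * sin (√3 * x / 2) * sin (y / 2)
    + 3 / 2 * y * cos (√3 * x / 2) * cos (y / 2)
    - 2 * sin (x / 2) * cos (√3 * y / 2)
    - √3 / 2 * y * sin (x / 2) * sin (√3 * y / 2)
    - √3 * cos (x / 2) * sin (√3 * y / 2)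
    - 3 / 2 * x * cos (x / 2) * cos (√3 * y / 2)
    + √3 * sin (√3 * x / 2) * cos (y / 2)

def dyQx (x y : ℝ) : ℝ :=
  -2 * sin y + 2 * x * cos y + 2 * √3 * sin (√3 * x / 2) * cos (y / 2)
    - x / 2 * cos (√3 * x / 2) * cos (y / 2)
    - √3 / 2 * y * sin (√3 * x / 2) * sin (y / 2)
    + 2 * √3 * cos (x / 2) * sin (√3 * y / 2)
    + 3 / 2 * y * cos (x / 2) * cos (√3 * y / 2)
    - 3 * sin (x / 2) * cos (√3 * y / 2)
    + 3 * √3 / 2 * x * sin (x / 2) * sin (√3 * y / 2)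
    + cos (√3 * x / 2) * sin (y / 2)

theorem sqrt_three_mul_self : √3 * √3 = 3 := mul_self_sqrt (by norm_num)

theorem deriv_Qx_fst (y : ℝ) : deriv (fun x => Qx x y) = fun x => dxQx x y := by
  funext x
  simp (disch := fun_prop) only [Qx, dxQx, deriv_fun_add, deriv_fun_sub, deriv_fun_mul,
    deriv_const', deriv_id'', deriv_const_mul_id', deriv_div_const, _root_.deriv_sin,
    _root_.deriv_cos, deriv_cos']
  linear_combination
    (cos (√3 * x / 2) * sin (y / 2) + y / 2 * cos (√3 * x / 2) * cos (y / 2))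
      * sqrt_three_mul_self

theorem deriv_Qx_snd (x : ℝ) : deriv (fun y => Qx x y) = fun y => dyQx x y := by
  funext y
  simp (disch := fun_prop) only [Qx, dyQx, deriv_fun_add, deriv_fun_sub, deriv_fun_mul,
    deriv_const', deriv_id'', deriv_const_mul_id', deriv_div_const, _root_.deriv_sin,
    _root_.deriv_cos, Real.deriv_sin, deriv_cos']
  linear_combination
    (y / 2 * cos (x / 2) * cos (√3 * y / 2) - sin (x / 2) * cos (√3 * y / 2))
      * sqrt_three_mul_self

theorem Qx_helmholtz (x y : ℝ) :
    deriv (deriv fun t => Qx t y) x + deriv (deriv fun t => Qx x t) y = -Qx x y := by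
  rw [deriv_Qx_fst, deriv_Qx_snd]
  simp (disch := fun_prop) only [Qx, dxQx, dyQx, deriv_fun_add, deriv_fun_sub, deriv.fun_neg',
    deriv_fun_mul, deriv_const', deriv_id'', deriv_const_mul_id', deriv_div_const,
    _root_.deriv_sin, _root_.deriv_cos, Real.deriv_sin, deriv_cos']
  linear_combination
    (x / 4 * cos (√3 * x / 2) * sin (y / 2) + 3 / 4 * x * sin (x / 2) * cos (√3 * y / 2)
      + cos (√3 * x / 2) * cos (y / 2) / 2 + cos (x / 2) * cos (√3 * y / 2))
      * sqrt_three_mul_self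

theorem dxQx_add_dxQx_swap (x y : ℝ) : dxQx x y + dxQx y x = 0 := by
  simp only [dxQx]
  ring

theorem Qfield_zero : (fun w => Qfield w 0) = fun w => Qx (w 0) (w 1) := rfl

theorem Qfield_one : (fun w => Qfield w 1) = fun w => Qx (w 1) (w 0) := rfl

/-- `𝔔` satisfies the vector Helmholtz equation `Δ𝔔 = -𝔔` componentwise
and is solenoidal. -/
theorem dihedral_Q_helmholtz_solenoidal :
    (∀ v, lap2 (fun w => Qfield w 0) v = -(Qfield v 0)) ∧
    (∀ v, lap2 (fun w => Qfield w 1) v = -(Qfield v 1)) ∧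
    (∀ v, div2 Qfield v = 0) := by
  refine ⟨fun v => ?_, fun v => ?_, fun v => ?_⟩
  · rw [Qfield_zero, lap2_uncurry]
    exact Qx_helmholtz (v 0) (v 1)
  · rw [Qfield_one, lap2_uncurry (fun x y => Qx y x), add_comm]
    exact Qx_helmholtz (v 1) (v 0)
  · rw [div2, Qfield_zero, Qfield_one, pd2_zero_uncurry, pd2_one_uncurry (fun x y => Qx y x),
      deriv_Qx_fst, deriv_Qx_fst]
    exact dxQx_add_dxQx_swap (v 0) (v 1)
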